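/- For any constants g > 0, B > 0 and p_max ∈ ℝ, the set {(γ, τ) ∈ ℝ × ℝ : τ > 0 and τ · (1/√g) · exp(γ · ln 2 / (B · τ)) ≤ τ · p_max} is a convex subset of ℝ². -/

import Mathlib

/-!
The constraint `τ · f(γ/τ) ≤ τ · p_max` with `f γ = exp (γ ln 2 / B) / √g` says that the
perspective of the convex function `f - p_max` is nonpositive on `τ > 0`. The perspective
`(x, t) ↦ t · φ(x/t)` of a convex `φ` is convex on `t > 0`, so the set is a sublevel set of a
convex function.
-/

open Set

theorem ConvexOn.perspective {E : Type*} [AddCommGroup E] [Module ℝ E] {f : E → ℝ}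
    (hf : ConvexOn ℝ univ f) :
    ConvexOn ℝ {p : E × ℝ | 0 < p.2} fun p => p.2 * f (p.2⁻¹ • p.1) := by
  refine ⟨convex_halfSpace_gt (LinearMap.snd ℝ E ℝ).isLinear 0, ?_⟩
  rintro ⟨x, s⟩ (hs : 0 < s) ⟨y, t⟩ (ht : 0 < t) a b ha hb hab
  simp only [Prod.smul_mk, Prod.mk_add_mk, smul_eq_mul]
  set u := a * s + b * t with hu_def
  have hu : 0 < u := by
    obtain rfl | ha := ha.eq_or_lt
    · rw [zero_add] at hab
      simpa [u, hab] using ht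
    · positivity
  -- Convexity of `f` at `x / s` and `y / t` with weights `a s / u` and `b t / u`.
  have hweights : a * s / u + b * t / u = 1 := by
    rw [← add_div, div_self hu.ne']
  have hmix : (a * s / u) • s⁻¹ • x + (b * t / u) • t⁻¹ • y = u⁻¹ • (a • x + b • y) := by
    simp only [smul_smul, smul_add]
    congr 2 <;> field_simp
  have hf_mix := hf.2 (mem_univ (s⁻¹ • x)) (mem_univ (t⁻¹ • y)) (by positivity) (by positivity)
    hweights
  rw [hmix, smul_eq_mul, smul_eq_mul] at hf_mix
  calc u * f (u⁻¹ • (a • x + b • y))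
      ≤ u * (a * s / u * f (s⁻¹ • x) + b * t / u * f (t⁻¹ • y)) := by gcongr
    _ = a * (s * f (s⁻¹ • x)) + b * (t * f (t⁻¹ • y)) := by field_simp

theorem fso_power_constraint_set_convex_general (g B pmax : ℝ) :
    Convex ℝ {p : ℝ × ℝ |
      0 < p.2 ∧
        p.2 * ((1 / Real.sqrt g) * Real.exp (p.1 * Real.log 2 / (B * p.2)))
          ≤ p.2 * pmax} := by
  set power : ℝ → ℝ := fun x => 1 / Real.sqrt g * Real.exp (x * Real.log 2 / B)
  have hpower : ConvexOn ℝ univ power := by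
    have := (convexOn_exp.comp_linearMap (LinearMap.mul ℝ ℝ (Real.log 2 / B))).smul
      (c := 1 / Real.sqrt g) (by positivity)
    simpa [power, Function.comp_def, mul_div_assoc, mul_comm] using this
  convert ((hpower.sub (concaveOn_const pmax convex_univ)).perspective).convex_le 0 using 1
  ext ⟨γ, τ⟩
  simp only [mem_ofPred_eq, Pi.sub_apply, smul_eq_mul, power, mul_sub, sub_nonpos]
  rw [show τ⁻¹ * γ * Real.log 2 / B = γ * Real.log 2 / (B * τ) by ring]

/-- The per-link power constraint set of (OPT-2),
`{(γ, τ) | τ > 0 ∧ τ · (1/√g) · exp (γ · ln 2 / (B · τ)) ≤ τ · p_max}`,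
is convex, for any `g > 0`, `B > 0` and `p_max ∈ ℝ`. -/
theorem fso_power_constraint_set_convex (g B pmax : ℝ) (hg : 0 < g) (hB : 0 < B) :
    Convex ℝ {p : ℝ × ℝ |
      0 < p.2 ∧
        p.2 * ((1 / Real.sqrt g) * Real.exp (p.1 * Real.log 2 / (B * p.2)))
          ≤ p.2 * pmax} :=
  fso_power_constraint_set_convex_general g B pmax
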